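/- With the hypotheses of the previous statement (P_1,...,P_b ∈ L, Q_1,...,Q_b ∈ M distinct lines, R off both lines, L∩M not among the points, no collinear triple R,P_i,Q_j), the unique curve of degree b passing through P_1,...,P_b, Q_1,...,Q_b and having multiplicity at least b−1 at R is irreducible. -/

import Mathlib

open MvPolynomial

noncomputable section

/-- The homogeneous ideal of a point of `ℙ²` with homogeneous coordinate vector `P`. -/
def pointIdeal (k : Type) [Field k] (P : Fin 3 → k) : Ideal (MvPolynomial (Fin 3) k) :=
  Ideal.span {f : MvPolynomial (Fin 3) k | f.IsHomogeneous 1 ∧ eval P f = 0}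

/-- The `t`-th symbolic power of the ideal of the point set `X` in `ℙ²`. -/
def symbolicPower (k : Type) [Field k] (X : Set (Fin 3 → k)) (t : ℕ) :
    Ideal (MvPolynomial (Fin 3) k) :=
  ⨅ P ∈ X, pointIdeal k P ^ t

/-- The initial degree `α(I)` of a (homogeneous) ideal: the least degree of a nonzero
homogeneous element of `I`. -/
def initDeg (k : Type) [Field k] (I : Ideal (MvPolynomial (Fin 3) k)) : ℕ :=
  sInf {d | ∃ f ∈ I, f ≠ 0 ∧ f.IsHomogeneous d}

/-- `waldIs k X w` says that the Waldschmidt constant of `I_X` exists and equals `w`,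
i.e. `α(I_X^{(t)})/t → w` as `t → ∞`. -/
def waldIs (k : Type) [Field k] (X : Set (Fin 3 → k)) (w : ℝ) : Prop :=
  Filter.Tendsto (fun t : ℕ => (initDeg k (symbolicPower k X t) : ℝ) / t)
    Filter.atTop (nhds w)

/-- Two vectors (or forms) define the same projective object. -/
def projEq (k : Type) [Field k] {M : Type*} [SMul k M] (x y : M) : Prop :=
  ∃ c : k, c ≠ 0 ∧ c • x = y

/-- A line in `ℙ²` is (the zero locus of) a nonzero linear form. -/
def IsLine (k : Type) [Field k] (l : MvPolynomial (Fin 3) k) : Prop :=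
  l ≠ 0 ∧ l.IsHomogeneous 1

/-- The point `P` lies on the line defined by the linear form `l`. -/
def onLine (k : Type) [Field k] (P : Fin 3 → k) (l : MvPolynomial (Fin 3) k) : Prop :=
  eval P l = 0

/-- Three points of `ℙ²` lie on a common line. -/
def collinear3 (k : Type) [Field k] (P Q R : Fin 3 → k) : Prop :=
  ∃ l, IsLine k l ∧ onLine k P l ∧ onLine k Q l ∧ onLine k R l

/-- The vectors in `X` are nonzero and represent pairwise distinct points of `ℙ²`. -/
def goodPoints (k : Type) [Field k] (X : Set (Fin 3 → k)) : Prop :=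
  (∀ P ∈ X, P ≠ 0) ∧ ∀ P ∈ X, ∀ Q ∈ X, P ≠ Q → ¬ projEq k P Q

/-- The degree-`d` part `[I]_d` of an ideal, as a `k`-vector space. -/
def degPart (k : Type) [Field k] (I : Ideal (MvPolynomial (Fin 3) k)) (d : ℕ) :
    Submodule k (MvPolynomial (Fin 3) k) :=
  (I.restrictScalars k) ⊓ homogeneousSubmodule (Fin 3) k d

/-- `n` points `[1 : j : h]`, `0 ≤ j ≤ n-1`, on the line `x₂ = h·x₀`. -/
def stdRow (k : Type) [Field k] (h n : ℕ) : Set (Fin 3 → k) :=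
  {P | ∃ j < n, P = ![1, (j : k), (h : k)]}

/-- A standard k-configuration of type `(a)`. -/
def std1 (k : Type) [Field k] (a : ℕ) : Set (Fin 3 → k) := stdRow k 0 a

/-- A standard k-configuration of type `(a, b)`. -/
def std2 (k : Type) [Field k] (a b : ℕ) : Set (Fin 3 → k) :=
  stdRow k 1 a ∪ stdRow k 0 b

/-- A standard k-configuration of type `(a, b, c)`. -/
def std3 (k : Type) [Field k] (a b c : ℕ) : Set (Fin 3 → k) :=
  stdRow k 2 a ∪ stdRow k 1 b ∪ stdRow k 0 c

/-- The multiplicity of the curve `f = 0` at the point `P`. -/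
def multAt (k : Type) [Field k] (P : Fin 3 → k) (f : MvPolynomial (Fin 3) k) : ℕ :=
  sSup {m | f ∈ pointIdeal k P ^ m}

/-!
Choose coordinates with `R = [1:0:0]`, `L = {x₀ = 0}` and `M = {x₀ = γ x₁}`. The fat point at `R`
then says that `f` has degree at most one in `x₀`, so in a factorization `f = g h` one factor,
say `g`, is free of `x₀`: it is a cone over `R`, and its restrictions to `L` and `M`, in the
parameter `t` of `[c : 1 : t]`, coincide. No line through `R` meets both a `Pᵢ` and a `Qⱼ`, so
the `2b` parameters of the points are distinct; at most `deg g` of them are roots of the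
common restriction of `g`, and at most `deg h` are roots of each restriction of `h`. Hence
`2b ≤ deg g + 2 deg h = 2b - deg g`, and `g` is constant, unless `f` vanishes on all of `L` or
of `M`. That cannot happen: a nonzero form of degree `b` and `x₀`-degree at most one vanishing
on one of the lines has at most `b - 1` zeros `[c : 1 : t]` on the other.
-/

open scoped Polynomial

namespace MvPolynomial

variable {σ R : Type*}

theorem IsHomogeneous.eval_smul [CommSemiring R] {φ : MvPolynomial σ R} {n : ℕ}
    (hφ : φ.IsHomogeneous n) (r : R) (v : σ → R) :
    eval (r • v) φ = r ^ n * eval v φ := by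
  simp only [eval_eq, Finset.mul_sum]
  refine Finset.sum_congr rfl fun d hd => ?_
  simp only [Pi.smul_apply, smul_eq_mul, mul_pow, Finset.prod_mul_distrib,
    Finset.prod_pow_eq_pow_sum, ← hφ.degree_eq_sum_deg_support hd]
  ring

theorem IsHomogeneous.eq_zero_of_forall_apply_eq_one [Field R] [Infinite R]
    {φ : MvPolynomial σ R} {n : ℕ} (hφ : φ.IsHomogeneous n) (i : σ)
    (h : ∀ v : σ → R, v i = 1 → eval v φ = 0) : φ = 0 := by
  have hXφ : X i * φ = 0 := MvPolynomial.funext fun v => by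
    by_cases hv : v i = 0
    · simp [hv]
    · have := hφ.eval_smul (v i) ((v i)⁻¹ • v)
      rw [smul_inv_smul₀ hv, h ((v i)⁻¹ • v) (by simp [hv]), mul_zero] at this
      simp [this]
  exact (mul_eq_zero.mp hXφ).resolve_left (X_ne_zero i)

theorem IsHomogeneous.exists_eq_sum_smul_X [Fintype σ] [CommSemiring R]
    {φ : MvPolynomial σ R} (hφ : φ.IsHomogeneous 1) : ∃ c : σ → R, φ = ∑ i, c i • X i := by
  have hφ' := (mem_homogeneousSubmodule 1 φ).mpr hφ
  rw [homogeneousSubmodule_one_eq_span_X, Submodule.mem_span_range_iff_exists_fun] at hφ'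
  obtain ⟨c, hc⟩ := hφ'
  exact ⟨c, hc.symm⟩

theorem IsHomogeneous.exists_dual_eval_eq [Fintype σ] [CommSemiring R]
    {φ : MvPolynomial σ R} (hφ : φ.IsHomogeneous 1) :
    ∃ χ : Module.Dual R (σ → R), ∀ v, eval v φ = χ v := by
  obtain ⟨c, rfl⟩ := hφ.exists_eq_sum_smul_X
  exact ⟨∑ i, c i • LinearMap.proj i, fun v => by simp⟩

section LinearSubst

variable [Fintype σ] [DecidableEq σ] [CommRing R]

def linearSubst (φ : (σ → R) →ₗ[R] σ → R) : MvPolynomial σ R →ₐ[R] MvPolynomial σ R :=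
  aeval fun i => ∑ j, C (LinearMap.toMatrix' φ i j) * X j

theorem eval_linearSubst (φ : (σ → R) →ₗ[R] σ → R) (v : σ → R) (p : MvPolynomial σ R) :
    eval v (linearSubst φ p) = eval (φ v) p := by
  induction p using MvPolynomial.induction_on with
  | C a => simp [linearSubst]
  | add p q hp hq => simp [hp, hq]
  | mul_X p i hp =>
    simp only [map_mul, hp, eval_X]
    rw [← LinearMap.toMatrix'_mulVec φ v]
    simp [linearSubst, Matrix.mulVec, dotProduct]

theorem linearSubst_comp (φ ψ : (σ → R) →ₗ[R] σ → R) :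
    (linearSubst φ).comp (linearSubst ψ) = linearSubst (ψ ∘ₗ φ) := by
  refine algHom_ext fun i => ?_
  simp only [AlgHom.comp_apply, linearSubst, aeval_X, map_sum, map_mul, algHom_C,
    LinearMap.toMatrix'_comp, Matrix.mul_apply, Finset.mul_sum, Finset.sum_mul, map_sum]
  rw [Finset.sum_comm]
  simp [mul_assoc]

theorem linearSubst_id : linearSubst (LinearMap.id : (σ → R) →ₗ[R] σ → R) = AlgHom.id R _ := by
  refine algHom_ext fun i => ?_
  simp [linearSubst, Pi.single_apply]

def linearSubstEquiv (e : (σ → R) ≃ₗ[R] σ → R) : MvPolynomial σ R ≃ₐ[R] MvPolynomial σ R :=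
  AlgEquiv.ofAlgHom (linearSubst e) (linearSubst e.symm)
    (by rw [linearSubst_comp, LinearEquiv.symm_comp, linearSubst_id])
    (by rw [linearSubst_comp, LinearEquiv.comp_symm, linearSubst_id])

theorem eval_linearSubstEquiv (e : (σ → R) ≃ₗ[R] σ → R) (v : σ → R) (p : MvPolynomial σ R) :
    eval v (linearSubstEquiv e p) = eval (e v) p :=
  eval_linearSubst _ v p

theorem IsHomogeneous.linearSubst {p : MvPolynomial σ R} {n : ℕ} (hp : p.IsHomogeneous n)
    (φ : (σ → R) →ₗ[R] σ → R) : (linearSubst φ p).IsHomogeneous n := by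
  have := hp.aeval _ fun i => IsHomogeneous.sum Finset.univ
    (fun j => C (LinearMap.toMatrix' φ i j) * X j) 1 fun j _ => isHomogeneous_C_mul_X _ j
  rwa [one_mul] at this

end LinearSubst

theorem totalDegree_pos_of_not_isUnit [Field R] {p : MvPolynomial σ R} (hp : p ≠ 0)
    (hu : ¬IsUnit p) : 0 < p.totalDegree := by
  refine Nat.pos_of_ne_zero fun h => hu ?_
  rw [totalDegree_eq_zero_iff_eq_C.mp h] at hp ⊢
  exact (Ne.isUnit fun h0 => hp (by rw [h0, map_zero])).map C

theorem add_le_degree_of_mem_span_X_pow [Fintype σ] [CommSemiring R] {j : σ} {m : ℕ}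
    {p : MvPolynomial σ R} (hp : p ∈ Ideal.span (X '' {i | i ≠ j}) ^ m) :
    ∀ d ∈ p.support, m + d j ≤ d.degree := by
  classical
  induction m generalizing p with
  | zero =>
    intro d _
    simpa [Finsupp.degree_eq_sum] using Finset.single_le_sum (by simp) (Finset.mem_univ j)
  | succ m ih =>
    rw [pow_succ] at hp
    refine Submodule.mul_induction_on hp (fun a ha b hb d hd => ?_) (fun a b ha hb d hd => ?_)
    · obtain ⟨u, hu, v, hv, rfl⟩ := Finset.mem_add.mp (support_mul a b hd)
      obtain ⟨i, hij, hvi⟩ := mem_ideal_span_X_image.mp hb v hv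
      have hv' : v i + v j ≤ v.degree := by
        rw [Finsupp.degree_eq_sum, ← Finset.sum_pair hij]
        exact Finset.sum_le_sum_of_subset (Finset.subset_univ _)
      have := ih ha u hu
      simp only [map_add, Finsupp.add_apply]
      omega
    · rcases Finset.mem_union.mp (support_add hd) with h | h
      exacts [ha d h, hb d h]

theorem degreeOf_le_of_mem_span_X_pow [Fintype σ] [CommSemiring R] {j : σ} {m n : ℕ}
    {p : MvPolynomial σ R} (hp : p ∈ Ideal.span (X '' {i | i ≠ j}) ^ m)
    (hn : p.IsHomogeneous n) : degreeOf j p ≤ n - m := by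
  refine degreeOf_le_iff.mpr fun d hd => ?_
  have h₁ := add_le_degree_of_mem_span_X_pow hp d hd
  have h₂ : d.degree = n := by
    rw [Finsupp.degree_eq_weight_one]
    exact hn (mem_support_iff.mp hd)
  omega

theorem natDegree_aeval_le_totalDegree [CommSemiring R] {g : σ → R[X]}
    (hg : ∀ i, (g i).natDegree ≤ 1) (p : MvPolynomial σ R) :
    (aeval g p).natDegree ≤ p.totalDegree := by
  classical
  conv_lhs => rw [p.as_sum]
  rw [map_sum]
  refine Polynomial.natDegree_sum_le_of_forall_le _ _ fun d hd => ?_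
  rw [aeval_monomial, Finsupp.prod]
  refine (Polynomial.natDegree_C_mul_le _ _).trans ?_
  refine (Polynomial.natDegree_prod_le _ _).trans ((Finset.sum_le_sum fun i _ => ?_).trans
    (le_totalDegree hd))
  exact Polynomial.natDegree_pow_le.trans (by simpa using Nat.mul_le_mul_left (d i) (hg i))

end MvPolynomial

namespace Polynomial

variable {R : Type*} [CommRing R] [IsDomain R] [DecidableEq R]

theorem card_add_card_le_natDegree_add {G U V : R[X]} (hG : G ≠ 0) (hU : U ≠ 0) (hV : V ≠ 0)
    {A B : Finset R} (hAB : Disjoint A B) (hA : ∀ x ∈ A, (G * U).eval x = 0)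
    (hB : ∀ x ∈ B, (G * V).eval x = 0) :
    A.card + B.card ≤ G.natDegree + U.natDegree + V.natDegree := by
  have hroots : ∀ {p : R[X]}, p ≠ 0 → ∀ Z : Finset R, (∀ x ∈ Z, p.eval x = 0) →
      Z.card ≤ p.natDegree := fun hp Z hZ =>
    card_le_degree_of_subset_roots fun x hx => (mem_roots hp).mpr (hZ x hx)
  have split : ∀ {W : R[X]}, W ≠ 0 → ∀ Z : Finset R, (∀ x ∈ Z, (G * W).eval x = 0) →
      Z.card ≤ (Z.filter (G.eval · = 0)).card + W.natDegree := fun hW Z hZ => by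
    rw [← Finset.card_filter_add_card_filter_not (G.eval · = 0)]
    refine Nat.add_le_add_left (hroots hW _ fun x hx => ?_) _
    obtain ⟨hxZ, hGx⟩ := Finset.mem_filter.mp hx
    simpa [hGx] using hZ x hxZ
  have hGroots : (A.filter (G.eval · = 0)).card + (B.filter (G.eval · = 0)).card ≤ G.natDegree := by
    rw [← Finset.card_union_of_disjoint (Finset.disjoint_filter_filter hAB)]
    exact hroots hG _ fun x hx => by
      rcases Finset.mem_union.mp hx with h | h <;> exact (Finset.mem_filter.mp h).2
  have := split hU A hA
  have := split hV B hB
  omega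

end Polynomial

section Configuration

variable {k : Type} [Field k]

def restrictLine (c : k) : MvPolynomial (Fin 3) k →ₐ[k] k[X] :=
  aeval ![Polynomial.C c, 1, Polynomial.X]

theorem eval_restrictLine (c t : k) (p : MvPolynomial (Fin 3) k) :
    (restrictLine c p).eval t = eval ![c, 1, t] p := by
  induction p using MvPolynomial.induction_on with
  | C a => simp [restrictLine]
  | add p q hp hq => simp [hp, hq]
  | mul_X p i hp =>
    simp only [map_mul, Polynomial.eval_mul, hp, eval_X]
    fin_cases i <;> simp [restrictLine]

theorem restrictLine_monomial (c a : k) (d : Fin 3 →₀ ℕ) :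
    restrictLine c (monomial d a) = Polynomial.C (a * c ^ d 0) * Polynomial.X ^ d 2 := by
  rw [restrictLine, aeval_monomial, Finsupp.prod_fintype _ _ (by simp), Fin.prod_univ_three]
  simp [mul_assoc]

theorem natDegree_restrictLine_le (c : k) (p : MvPolynomial (Fin 3) k) :
    (restrictLine c p).natDegree ≤ p.totalDegree :=
  natDegree_aeval_le_totalDegree (fun i => by fin_cases i <;> simp) p

theorem natDegree_restrictLine_sub_le (c₁ c₂ : k) (p : MvPolynomial (Fin 3) k) :
    (restrictLine c₂ p - restrictLine c₁ p).natDegree ≤ p.totalDegree - 1 := by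
  classical
  conv_lhs => rw [p.as_sum]
  rw [map_sum, map_sum, ← Finset.sum_sub_distrib]
  refine Polynomial.natDegree_sum_le_of_forall_le _ _ fun d hd => ?_
  rw [restrictLine_monomial, restrictLine_monomial, ← sub_mul, ← map_sub]
  rcases Nat.eq_zero_or_pos (d 0) with h0 | h0
  · simp [h0]
  · refine (Polynomial.natDegree_C_mul_X_pow_le _ _).trans ?_
    have hd' : d 0 + d 2 ≤ p.totalDegree := by
      refine le_trans ?_ (le_totalDegree hd)
      simp [Finsupp.sum_fintype, Fin.sum_univ_three]
    omega

theorem restrictLine_eq_of_degreeOf_eq_zero {p : MvPolynomial (Fin 3) k} (hp : degreeOf 0 p = 0)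
    (c₁ c₂ : k) : restrictLine c₁ p = restrictLine c₂ p := by
  refine hom_congr_vars (f₁ := (restrictLine c₁).toRingHom) (f₂ := (restrictLine c₂).toRingHom)
    (by ext; simp) (fun i hi _ => ?_) rfl
  have hi0 : i ≠ 0 := by
    rintro rfl
    exact mem_vars_iff_degreeOf_ne_zero.mp hi hp
  fin_cases i
  · exact absurd rfl hi0
  all_goals simp [restrictLine]

theorem eval_eq_zero_of_restrictLine_eq_zero_of_ne {f : MvPolynomial (Fin 3) k}
    (hdeg : degreeOf 0 f ≤ 1) {c₁ c₂ : k} (hc : c₁ ≠ c₂) (h₁ : restrictLine c₁ f = 0)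
    (h₂ : restrictLine c₂ f = 0) (x t : k) : eval ![x, 1, t] f = 0 := by
  classical
  -- `x ↦ f(x, 1, t)` has degree at most one and vanishes at `c₁` and `c₂`
  have hq : Polynomial.map (eval ![1, t]) (finSuccEquiv k 2 f) = 0 := by
    refine Polynomial.eq_zero_of_natDegree_lt_card_of_eval_eq_zero' _ {c₁, c₂} (fun c hc => ?_) ?_
    · rw [← eval_eq_eval_mv_eval']
      change eval ![c, 1, t] f = 0
      rcases Finset.mem_insert.mp hc with rfl | hc
      · rw [← eval_restrictLine, h₁, Polynomial.eval_zero]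
      · rw [Finset.mem_singleton.mp hc, ← eval_restrictLine, h₂, Polynomial.eval_zero]
    · rw [Finset.card_pair hc]
      exact (Polynomial.natDegree_map_le.trans (natDegree_finSuccEquiv f ▸ hdeg)).trans_lt
        one_lt_two
  exact (eval_eq_eval_mv_eval' ![1, t] x f).trans (by rw [hq, Polynomial.eval_zero])

theorem eq_zero_of_restrictLine_eq_zero [Infinite k] {n : ℕ} (hn : 0 < n)
    {f : MvPolynomial (Fin 3) k} (hf : f.IsHomogeneous n) (hdeg : degreeOf 0 f ≤ 1) {c₁ c₂ : k}
    (hc : c₁ ≠ c₂) (h₁ : restrictLine c₁ f = 0) {T : Finset k} (hT : n ≤ T.card)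
    (h₂ : ∀ t ∈ T, eval ![c₂, 1, t] f = 0) : f = 0 := by
  have h₂' : restrictLine c₂ f = 0 := by
    have hD := Polynomial.eq_zero_of_natDegree_lt_card_of_eval_eq_zero'
      (restrictLine c₂ f - restrictLine c₁ f) T
      (fun t ht => by simp [h₁, eval_restrictLine, h₂ t ht])
      ((natDegree_restrictLine_sub_le c₁ c₂ f).trans_lt (by have := hf.totalDegree_le; omega))
    rwa [h₁, sub_zero] at hD
  refine hf.eq_zero_of_forall_apply_eq_one 1 fun v hv => ?_
  have hv' : v = ![v 0, 1, v 2] := by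
    ext i
    fin_cases i <;> simp [hv]
  rw [hv']
  exact eval_eq_zero_of_restrictLine_eq_zero_of_ne hdeg hc h₁ h₂' _ _

theorem restrictLine_eq_zero_or_restrictLine_eq_zero {g h : MvPolynomial (Fin 3) k}
    (hg : degreeOf 0 g = 0) (hg₀ : 0 < g.totalDegree) {c₁ c₂ : k} {T₁ T₂ : Finset k}
    (hT : Disjoint T₁ T₂) (hT₁ : g.totalDegree + h.totalDegree ≤ T₁.card)
    (hT₂ : g.totalDegree + h.totalDegree ≤ T₂.card)
    (h₁ : ∀ t ∈ T₁, eval ![c₁, 1, t] (g * h) = 0) (h₂ : ∀ t ∈ T₂, eval ![c₂, 1, t] (g * h) = 0) :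
    restrictLine c₁ (g * h) = 0 ∨ restrictLine c₂ (g * h) = 0 := by
  classical
  by_contra! hne
  obtain ⟨hne₁, hne₂⟩ := hne
  rw [map_mul] at hne₁ hne₂
  rw [restrictLine_eq_of_degreeOf_eq_zero hg c₂ c₁] at hne₂
  have hcount := Polynomial.card_add_card_le_natDegree_add (left_ne_zero_of_mul hne₁)
    (right_ne_zero_of_mul hne₁) (right_ne_zero_of_mul hne₂) hT
    (fun t ht => by rw [← map_mul, eval_restrictLine, h₁ t ht])
    (fun t ht => by
      rw [restrictLine_eq_of_degreeOf_eq_zero hg c₁ c₂, ← map_mul, eval_restrictLine, h₂ t ht])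
  have := natDegree_restrictLine_le c₁ g
  have := natDegree_restrictLine_le c₁ h
  have := natDegree_restrictLine_le c₂ h
  omega

theorem isUnit_of_mul_of_degreeOf_eq_zero [Infinite k] {n : ℕ} (hn : 0 < n)
    {g h : MvPolynomial (Fin 3) k} (hf₀ : g * h ≠ 0) (hf : (g * h).IsHomogeneous n)
    (hdeg : degreeOf 0 (g * h) ≤ 1)
    (hg : degreeOf 0 g = 0) {c₁ c₂ : k} (hc : c₁ ≠ c₂) {T₁ T₂ : Finset k} (hT : Disjoint T₁ T₂)
    (hT₁ : n ≤ T₁.card) (hT₂ : n ≤ T₂.card) (h₁ : ∀ t ∈ T₁, eval ![c₁, 1, t] (g * h) = 0)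
    (h₂ : ∀ t ∈ T₂, eval ![c₂, 1, t] (g * h) = 0) : IsUnit g := by
  by_contra hu
  have hgh : g.totalDegree + h.totalDegree = n := by
    rw [← totalDegree_mul_of_isDomain (left_ne_zero_of_mul hf₀) (right_ne_zero_of_mul hf₀),
      hf.totalDegree hf₀]
  rcases restrictLine_eq_zero_or_restrictLine_eq_zero hg
      (totalDegree_pos_of_not_isUnit (left_ne_zero_of_mul hf₀) hu) hT (hgh ▸ hT₁) (hgh ▸ hT₂)
      h₁ h₂ with h0 | h0
  · exact hf₀ (eq_zero_of_restrictLine_eq_zero hn hf hdeg hc h0 hT₂ h₂)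
  · exact hf₀ (eq_zero_of_restrictLine_eq_zero hn hf hdeg hc.symm h0 hT₁ h₁)

theorem irreducible_of_vanishing_on_two_lines [Infinite k] {n : ℕ} (hn : 0 < n)
    {f : MvPolynomial (Fin 3) k} (hf₀ : f ≠ 0) (hf : f.IsHomogeneous n)
    (hdeg : degreeOf 0 f ≤ 1) {c₁ c₂ : k} (hc : c₁ ≠ c₂)
    {T₁ T₂ : Finset k} (hT : Disjoint T₁ T₂) (hT₁ : n ≤ T₁.card) (hT₂ : n ≤ T₂.card)
    (h₁ : ∀ t ∈ T₁, eval ![c₁, 1, t] f = 0) (h₂ : ∀ t ∈ T₂, eval ![c₂, 1, t] f = 0) :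
    Irreducible f := by
  refine ⟨fun hu => ?_, fun g h hgh => ?_⟩
  · have := (isUnit_iff_totalDegree_of_isReduced.mp hu).2
    rw [hf.totalDegree hf₀] at this
    omega
  subst hgh
  have hdeg' := degreeOf_mul_eq (n := 0) (left_ne_zero_of_mul hf₀) (right_ne_zero_of_mul hf₀)
  rcases Nat.eq_zero_or_pos (degreeOf 0 g) with hg | hg
  · exact .inl (isUnit_of_mul_of_degreeOf_eq_zero hn hf₀ hf hdeg hg hc hT hT₁ hT₂ h₁ h₂)
  · have hh : degreeOf 0 h = 0 := by omega
    rw [mul_comm] at hf₀ hf hdeg h₁ h₂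
    exact .inr (isUnit_of_mul_of_degreeOf_eq_zero hn hf₀ hf hdeg hh hc hT hT₁ hT₂ h₁ h₂)

theorem eval_eq_zero_of_mem_pointIdeal {P : Fin 3 → k} {f : MvPolynomial (Fin 3) k}
    (hf : f ∈ pointIdeal k P) : eval P f = 0 :=
  (Ideal.span_le.mpr fun _ hg => hg.2 : pointIdeal k P ≤ RingHom.ker (eval P)) hf

theorem pointIdeal_single_le (j : Fin 3) :
    pointIdeal k (Pi.single j 1) ≤ Ideal.span (X '' {i | i ≠ j}) := by
  refine Ideal.span_le.mpr fun ℓ ⟨hℓ, hℓj⟩ => ?_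
  obtain ⟨c, rfl⟩ := hℓ.exists_eq_sum_smul_X
  refine Ideal.sum_mem _ fun i _ => ?_
  rcases eq_or_ne i j with rfl | hij
  · have : c i = 0 := by simpa [Pi.single_apply] using hℓj
    simp [this]
  · exact Submodule.smul_of_tower_mem _ (c i) (Ideal.subset_span ⟨i, hij, rfl⟩)

theorem degreeOf_le_of_mem_pointIdeal_pow {j : Fin 3} {m n : ℕ} {f : MvPolynomial (Fin 3) k}
    (hf : f ∈ pointIdeal k (Pi.single j 1) ^ m) (hn : f.IsHomogeneous n) :
    degreeOf j f ≤ n - m :=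
  degreeOf_le_of_mem_span_X_pow (Ideal.pow_right_mono (pointIdeal_single_le j) m hf) hn

theorem linearSubstEquiv_mem_pointIdeal_pow (e : (Fin 3 → k) ≃ₗ[k] Fin 3 → k) {P : Fin 3 → k}
    {f : MvPolynomial (Fin 3) k} {m : ℕ} (hf : f ∈ pointIdeal k P ^ m) :
    linearSubstEquiv e f ∈ pointIdeal k (e.symm P) ^ m := by
  have hmap : (pointIdeal k P).map (linearSubstEquiv e) ≤ pointIdeal k (e.symm P) := by
    rw [pointIdeal, Ideal.map_span, Ideal.span_le]
    rintro _ ⟨ℓ, ⟨hℓ, hℓP⟩, rfl⟩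
    exact Ideal.subset_span
      ⟨hℓ.linearSubst _, by rw [eval_linearSubstEquiv, e.apply_symm_apply, hℓP]⟩
  refine Ideal.pow_right_mono hmap m ?_
  rw [← Ideal.map_pow]
  exact Ideal.mem_map_of_mem _ hf

theorem projEq_smul_smul {M : Type*} [MulAction k M] (x : M) {c c' : k} (hc : c ≠ 0)
    (hc' : c' ≠ 0) : projEq k (c • x) (c' • x) :=
  ⟨c' / c, div_ne_zero hc' hc, by rw [smul_smul, div_mul_cancel₀ c' hc]⟩

theorem projEq.map {M N : Type*} [AddCommMonoid M] [Module k M] [AddCommMonoid N] [Module k N]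
    (g : M →ₗ[k] N) {x y : M} (h : projEq k x y) : projEq k (g x) (g y) :=
  let ⟨c, hc, hxy⟩ := h
  ⟨c, hc, by rw [← map_smul, hxy]⟩

theorem collinear3.map (e : (Fin 3 → k) ≃ₗ[k] Fin 3 → k) {P Q R : Fin 3 → k}
    (h : collinear3 k P Q R) : collinear3 k (e P) (e Q) (e R) := by
  obtain ⟨l, ⟨hl₀, hl⟩, hP, hQ, hR⟩ := h
  refine ⟨linearSubstEquiv e.symm l,
    ⟨(map_ne_zero_iff _ (linearSubstEquiv e.symm).injective).mpr hl₀, hl.linearSubst _⟩,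
    ?_, ?_, ?_⟩ <;>
  simpa [onLine, eval_linearSubstEquiv]

theorem collinear3_single_zero {p q : Fin 3 → k} (hp : p 1 ≠ 0) (hq : q 1 ≠ 0)
    (h : p 2 / p 1 = q 2 / q 1) : collinear3 k (Pi.single 0 1) p q := by
  refine ⟨X 2 - C (p 2 / p 1) * X 1,
    ⟨fun h0 => ?_, (isHomogeneous_X k 2).sub (isHomogeneous_C_mul_X _ 1)⟩, ?_, ?_, ?_⟩
  · simpa using congrArg (eval (Pi.single 2 1)) h0
  · simp [onLine]
  · simp [onLine, div_mul_cancel₀ _ hp]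
  · simp [onLine, h, div_mul_cancel₀ _ hq]

theorem eq_smul_of_apply_zero_eq {w : Fin 3 → k} {c : k} (h1 : w 1 ≠ 0) (h0 : w 0 = c * w 1) :
    w = w 1 • ![c, 1, w 2 / w 1] := by
  ext i
  fin_cases i <;> simp [h0, mul_comm, mul_div_cancel₀ _ h1]

section LineFamily

variable [DecidableEq k] {b : ℕ} {c : k} {p : Fin b → Fin 3 → k}

theorem card_image_div_eq (h1 : ∀ i, p i 1 ≠ 0) (h0 : ∀ i, p i 0 = c * p i 1)
    (hp : ∀ i j, i ≠ j → ¬ projEq k (p i) (p j)) :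
    (Finset.univ.image fun i => p i 2 / p i 1).card = b := by
  rw [Finset.card_image_of_injective _ fun i j hij => ?_, Finset.card_univ, Fintype.card_fin]
  by_contra hne
  refine hp i j hne ?_
  rw [eq_smul_of_apply_zero_eq (h1 i) (h0 i), eq_smul_of_apply_zero_eq (h1 j) (h0 j), hij]
  exact projEq_smul_smul _ (h1 i) (h1 j)

theorem eval_eq_zero_of_mem_image_div {f : MvPolynomial (Fin 3) k} {n : ℕ}
    (hf : f.IsHomogeneous n) (h1 : ∀ i, p i 1 ≠ 0) (h0 : ∀ i, p i 0 = c * p i 1)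
    (hfp : ∀ i, eval (p i) f = 0) :
    ∀ t ∈ Finset.univ.image (fun i => p i 2 / p i 1), eval ![c, 1, t] f = 0 := by
  simp only [Finset.mem_image, Finset.mem_univ, true_and, forall_exists_index,
    forall_apply_eq_imp_iff]
  intro i
  have := hfp i
  rw [eq_smul_of_apply_zero_eq (h1 i) (h0 i), hf.eval_smul] at this
  exact (mul_eq_zero.mp this).resolve_left (pow_ne_zero _ (h1 i))

end LineFamily

theorem irreducible_of_normalized_configuration [Infinite k] {b : ℕ} (hb : 0 < b)
    {f : MvPolynomial (Fin 3) k} (hf₀ : f ≠ 0) (hf : f.IsHomogeneous b)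
    (hfR : f ∈ pointIdeal k (Pi.single 0 1) ^ (b - 1))
    {γ : k} (hγ : γ ≠ 0) {P Q : Fin b → Fin 3 → k} (hPL : ∀ i, P i 0 = 0)
    (hPM : ∀ i, P i 0 ≠ γ * P i 1) (hQM : ∀ j, Q j 0 = γ * Q j 1) (hQL : ∀ j, Q j 0 ≠ 0)
    (hPd : ∀ i j, i ≠ j → ¬ projEq k (P i) (P j)) (hQd : ∀ i j, i ≠ j → ¬ projEq k (Q i) (Q j))
    (hcol : ∀ i j, ¬ collinear3 k (Pi.single 0 1) (P i) (Q j))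
    (hfP : ∀ i, eval (P i) f = 0) (hfQ : ∀ j, eval (Q j) f = 0) : Irreducible f := by
  classical
  have hP1 : ∀ i, P i 1 ≠ 0 := fun i h => hPM i (by rw [hPL i, h, mul_zero])
  have hQ1 : ∀ j, Q j 1 ≠ 0 := fun j h => hQL j (by rw [hQM j, h, mul_zero])
  have hP0 : ∀ i, P i 0 = 0 * P i 1 := fun i => by rw [hPL i, zero_mul]
  refine irreducible_of_vanishing_on_two_lines hb hf₀ hf
    (by have := degreeOf_le_of_mem_pointIdeal_pow hfR hf; omega) hγ.symm ?_
    (card_image_div_eq hP1 hP0 hPd).ge (card_image_div_eq hQ1 hQM hQd).ge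
    (eval_eq_zero_of_mem_image_div hf hP1 hP0 hfP) (eval_eq_zero_of_mem_image_div hf hQ1 hQM hfQ)
  simp only [Finset.disjoint_left, Finset.mem_image, Finset.mem_univ, true_and]
  rintro _ ⟨i, rfl⟩ ⟨j, hij⟩
  exact hcol i j (collinear3_single_zero (hP1 i) (hQ1 j) hij.symm)

theorem exists_linearEquiv_adapted (φ ψ : Module.Dual k (Fin 3 → k)) {R P : Fin 3 → k}
    (hφR : φ R ≠ 0) (hψR : ψ R ≠ 0) (hφP : φ P = 0) (hψP : ψ P ≠ 0) :
    ∃ e : (Fin 3 → k) ≃ₗ[k] Fin 3 → k, e R = Pi.single 0 1 ∧ ∃ γ ≠ 0,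
      ∀ p, (φ p = 0 ↔ e p 0 = 0) ∧ (ψ p = 0 ↔ e p 0 = γ * e p 1) := by
  obtain ⟨S, hS, hS₀⟩ := Submodule.exists_mem_ne_zero_of_ne_bot
    (LinearMap.ker_ne_bot_of_finrank_lt (f := φ.prod ψ) (by simp))
  have hφS : φ S = 0 := congrArg Prod.fst hS
  have hψS : ψ S = 0 := congrArg Prod.snd hS
  have hli : LinearIndependent k ![R, P, S] := by
    rw [Fintype.linearIndependent_iff]
    intro g hg
    simp only [Fin.sum_univ_three, Matrix.cons_val_zero, Matrix.cons_val_one,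
      Matrix.cons_val_two, Matrix.head_cons, Matrix.tail_cons] at hg
    have h0 : g 0 = 0 := by simpa [hφP, hφS, hφR] using congrArg φ hg
    have h1 : g 1 = 0 := by simpa [h0, hψS, hψP] using congrArg ψ hg
    have h2 : g 2 = 0 := by simpa [h0, h1, hS₀] using hg
    intro i
    fin_cases i <;> assumption
  let e := (basisOfLinearIndependentOfCardEqFinrank hli (by simp)).equivFun
  have he : ∀ w, e.symm w = w 0 • R + w 1 • P + w 2 • S := fun w => by
    simp [e, Module.Basis.equivFun_symm_apply, Fin.sum_univ_three]
  refine ⟨e, (e.symm_apply_eq.mp (by simp [he])).symm, -ψ P / ψ R, by simp [hψP, hψR],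
    fun p => ?_⟩
  obtain ⟨w, rfl⟩ := e.symm.surjective p
  rw [e.apply_symm_apply, he]
  simp only [map_add, map_smul, smul_eq_mul, hφP, hφS, hψS]
  constructor
  · simp [hφR]
  · rw [div_mul_eq_mul_div, eq_div_iff hψR]
    constructor <;> intro h <;> linear_combination h

end Configuration

theorem irreducible_of_two_lines_and_fat_point_general (k : Type) [Field k] [IsAlgClosed k]
    (b : ℕ) (hb : 0 < b)
    (L M : MvPolynomial (Fin 3) k) (hL : IsLine k L) (hM : IsLine k M)
    (P Q : Fin b → (Fin 3 → k)) (R : Fin 3 → k)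
    (hPL : ∀ i, onLine k (P i) L) (hQM : ∀ i, onLine k (Q i) M)
    (hRL : ¬ onLine k R L) (hRM : ¬ onLine k R M)
    (hPd : ∀ i j, i ≠ j → ¬ projEq k (P i) (P j))
    (hQd : ∀ i j, i ≠ j → ¬ projEq k (Q i) (Q j))
    (hPint : ∀ i, ¬ onLine k (P i) M) (hQint : ∀ i, ¬ onLine k (Q i) L)
    (hcol : ∀ i j, ¬ collinear3 k R (P i) (Q j)) :
    ∀ f ∈ (⨅ i, pointIdeal k (P i)) ⊓ (⨅ i, pointIdeal k (Q i)) ⊓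
        pointIdeal k R ^ (b - 1),
      f ≠ 0 → f.IsHomogeneous b → Irreducible f := by
  intro f hf hf₀ hfb
  obtain ⟨⟨hfP, hfQ⟩, hfR⟩ := hf
  obtain ⟨φ, hφ⟩ := hL.2.exists_dual_eval_eq
  obtain ⟨ψ, hψ⟩ := hM.2.exists_dual_eval_eq
  simp only [onLine, hφ, hψ] at hPL hQM hRL hRM hPint hQint
  obtain ⟨e, heR, γ, hγ, he⟩ :=
    exists_linearEquiv_adapted φ ψ hRL hRM (hPL ⟨0, hb⟩) (hPint ⟨0, hb⟩)
  refine (MulEquiv.irreducible_iff (linearSubstEquiv e.symm)).mp <|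
    irreducible_of_normalized_configuration hb
    ((map_ne_zero_iff _ (linearSubstEquiv _).injective).mpr hf₀) (hfb.linearSubst _)
    (by simpa [heR] using linearSubstEquiv_mem_pointIdeal_pow e.symm hfR) hγ
    (P := fun i => e (P i)) (Q := fun j => e (Q j))
    (fun i => (he _).1.mp (hPL i)) (fun i => mt (he _).2.mpr (hPint i))
    (fun j => (he _).2.mp (hQM j)) (fun j => mt (he _).1.mpr (hQint j))
    (fun i j hij h => hPd i j hij (by simpa using h.map e.symm.toLinearMap))
    (fun i j hij h => hQd i j hij (by simpa using h.map e.symm.toLinearMap))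
    (fun i j h => hcol i j (by simpa [← heR] using h.map e.symm))
    (fun i => by simpa [eval_linearSubstEquiv] using
      eval_eq_zero_of_mem_pointIdeal (Ideal.mem_iInf.mp hfP i))
    (fun j => by simpa [eval_linearSubstEquiv] using
      eval_eq_zero_of_mem_pointIdeal (Ideal.mem_iInf.mp hfQ j))

/-- the unique degree-`b` curve through `P₁,…,P_b, Q₁,…,Q_b` with
multiplicity at least `b−1` at `R` is irreducible. -/
theorem irreducible_of_two_lines_and_fat_point (k : Type) [Field k] [IsAlgClosed k] [CharZero k]
    (b : ℕ) (hb : 0 < b)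
    (L M : MvPolynomial (Fin 3) k) (hL : IsLine k L) (hM : IsLine k M)
    (hLM : ¬ projEq k L M)
    (P Q : Fin b → (Fin 3 → k)) (R : Fin 3 → k)
    (hP0 : ∀ i, P i ≠ 0) (hQ0 : ∀ i, Q i ≠ 0) (hR0 : R ≠ 0)
    (hPL : ∀ i, onLine k (P i) L) (hQM : ∀ i, onLine k (Q i) M)
    (hRL : ¬ onLine k R L) (hRM : ¬ onLine k R M)
    (hPd : ∀ i j, i ≠ j → ¬ projEq k (P i) (P j))
    (hQd : ∀ i j, i ≠ j → ¬ projEq k (Q i) (Q j))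
    (hPQ : ∀ i j, ¬ projEq k (P i) (Q j))
    (hPint : ∀ i, ¬ onLine k (P i) M) (hQint : ∀ i, ¬ onLine k (Q i) L)
    (hcol : ∀ i j, ¬ collinear3 k R (P i) (Q j)) :
    ∀ f ∈ (⨅ i, pointIdeal k (P i)) ⊓ (⨅ i, pointIdeal k (Q i)) ⊓
        pointIdeal k R ^ (b - 1),
      f ≠ 0 → f.IsHomogeneous b → Irreducible f :=
  irreducible_of_two_lines_and_fat_point_general k b hb L M hL hM P Q R hPL hQM hRL hRM hPd hQd
    hPint hQint hcol
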